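/- If X is L-compositional and f : Σ → Σ is an L-isomorphism (a bijective L-homomorphism whose inverse is also a function Σ → Σ), then the elementwise extension of f is a symmetry of X: the image of X under f equals X. -/

import Mathlib

/-- A lexical algebra: an indexed family of finitary Boolean relations on an alphabet. -/
structure LexAlg (α : Type) where
  ι : Type
  arity : ι → ℕ
  rel : (i : ι) → (Fin (arity i) → α) → Bool

/-- `f` is an `L`-homomorphism: it preserves every relation of `L` exactly. -/
def LexAlg.IsHom {α : Type} (L : LexAlg α) (f : α → α) : Prop :=
  ∀ i (a : Fin (L.arity i) → α), L.rel i a = L.rel i (f ∘ a)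

/-- Lexical representation of a sequence: the tuple of relational tensors. -/
def LexAlg.rep {α : Type} (L : LexAlg α) (x : List α) :
    (i : L.ι) → (Fin (L.arity i) → Fin x.length) → Bool :=
  fun i idx => L.rel i (fun k => x.get (idx k))

/-- `X` is `L`-compositional: membership is a function of the lexical representation. -/
def LexAlg.Compositional {α : Type} (L : LexAlg α) (X : Set (List α)) : Prop :=
  ∃ C : (Σ m : ℕ, (i : L.ι) → (Fin (L.arity i) → Fin m) → Bool) → Bool,
    ∀ x : List α, x ∈ X ↔ C ⟨x.length, L.rep x⟩ = true


/-! An `L`-homomorphism `f` leaves the lexical representation of every sequence unchanged, so by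
compositionality `x.map f ∈ X ↔ x ∈ X`, i.e. `X` is the preimage of itself under `List.map f`.
Since `f` is surjective, so is `List.map f`, and a set equal to its preimage under a surjection
is also equal to its image. -/

namespace LexAlg

variable {α : Type} (L : LexAlg α)

lemma sigma_mk_eq_of_fin_cast {m n : ℕ} (h : m = n)
    (F : (i : L.ι) → (Fin (L.arity i) → Fin m) → Bool)
    (G : (i : L.ι) → (Fin (L.arity i) → Fin n) → Bool)
    (hFG : ∀ i idx, F i idx = G i (Fin.cast h ∘ idx)) :
    (⟨m, F⟩ : Σ m : ℕ, (i : L.ι) → (Fin (L.arity i) → Fin m) → Bool) = ⟨n, G⟩ := by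
  subst h
  exact congrArg (Sigma.mk m) (funext fun i => funext (hFG i))

variable {L}

lemma IsHom.rep_map {f : α → α} (hf : L.IsHom f) (x : List α) (i : L.ι)
    (idx : Fin (L.arity i) → Fin (x.map f).length) :
    L.rep (x.map f) i idx = L.rep x i (Fin.cast (List.length_map f) ∘ idx) := by
  have hget : (fun k => (x.map f).get (idx k)) =
      f ∘ fun k => x.get (Fin.cast (List.length_map f) (idx k)) := by
    funext k
    simp [List.get_eq_getElem]
  simp only [rep, hget]
  exact (hf i _).symm

lemma IsHom.sigma_rep_map {f : α → α} (hf : L.IsHom f) (x : List α) :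
    (⟨(x.map f).length, L.rep (x.map f)⟩ :
        Σ m : ℕ, (i : L.ι) → (Fin (L.arity i) → Fin m) → Bool) = ⟨x.length, L.rep x⟩ :=
  sigma_mk_eq_of_fin_cast L (List.length_map f) _ _ (hf.rep_map x)

lemma Compositional.preimage_map {X : Set (List α)} (hX : L.Compositional X) {f : α → α}
    (hf : L.IsHom f) : List.map f ⁻¹' X = X := by
  obtain ⟨C, hC⟩ := hX
  ext x
  rw [Set.mem_preimage, hC, hC, hf.sigma_rep_map x]

end LexAlg

theorem liso_is_symmetry_general {α : Type} (L : LexAlg α)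
    (X : Set (List α)) (hX : L.Compositional X) (f : α → α)
    (hf : L.IsHom f) (hbij : Function.Bijective f) :
    (fun x : List α => x.map f) '' X = X := by
  calc List.map f '' X = List.map f '' (List.map f ⁻¹' X) := by rw [hX.preimage_map hf]
    _ = X := Set.image_preimage_eq X hbij.surjective.list_map

theorem liso_is_symmetry {α : Type} [Finite α] (L : LexAlg α)
    (X : Set (List α)) (hX : L.Compositional X) (f : α → α)
    (hf : L.IsHom f) (hbij : Function.Bijective f) :
    (fun x : List α => x.map f) '' X = X :=
  liso_is_symmetry_general L X hX f hf hbij
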